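/- Let D be a symmetric real n×n matrix and let δ ≥ 0 satisfy δ < |λ| for every nonzero eigenvalue λ of D. Suppose ζ : ℝ → ℝⁿ is differentiable with ζ'(θ) = D·ζ(θ) for all θ, and ∫_ℝ ‖ζ(θ)‖² · e^{-2δ|θ|} dθ < ∞. Then ζ is constant and D·ζ(θ) = 0 for all θ. -/

import Mathlib

open MeasureTheory Matrix

open scoped RealInnerProductSpace

/-! Along an eigenvector `v` of `D` with eigenvalue `λ`, the coefficient `⟪v, ζ θ⟫` solves
`f' = λ f`, hence equals `c e^{λθ}`. Then `c² e^{2λθ - 2δ|θ|}` is dominated by the integrable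
`‖v‖² ‖ζ θ‖² e^{-2δ|θ|}`, while for `|λ| > δ` it is at least `c²` on a half-line of infinite
measure; so `c = 0`. Expanding `D ζ θ` in an orthonormal eigenbasis, only the eigenvalues `λ ≠ 0`
contribute, so `D ζ = 0`, and then `ζ' = 0`. -/

lemma eq_zero_of_le_of_integrableOn {α : Type*} [MeasurableSpace α] {μ : Measure α}
    {h : α → ℝ} {S : Set α} (hh : IntegrableOn h S μ) (hSm : MeasurableSet S) (hS : μ S = ⊤)
    {c : ℝ} (hc : 0 ≤ c) (hle : ∀ θ ∈ S, c ≤ h θ) : c = 0 := by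
  have hconst : IntegrableOn (fun _ ↦ c) S μ := by
    refine hh.mono' aestronglyMeasurable_const (ae_restrict_of_forall_mem hSm fun θ hθ ↦ ?_)
    rw [Real.norm_of_nonneg hc]
    exact hle θ hθ
  simpa [hS] using hconst

lemma exists_ray_nonneg_sub_mul_abs {a b : ℝ} (hab : b < |a|) :
    ∃ S : Set ℝ, MeasurableSet S ∧ volume S = ⊤ ∧ ∀ θ ∈ S, 0 ≤ a * θ - b * |θ| := by
  rcases le_or_gt 0 a with ha | ha
  · refine ⟨Set.Ici 0, measurableSet_Ici, Real.volume_Ici, fun θ (hθ : 0 ≤ θ) ↦ ?_⟩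
    rw [abs_of_nonneg ha] at hab
    rw [abs_of_nonneg hθ]
    nlinarith
  · refine ⟨Set.Iic 0, measurableSet_Iic, Real.volume_Iic, fun θ (hθ : θ ≤ 0) ↦ ?_⟩
    rw [abs_of_neg ha] at hab
    rw [abs_of_nonpos hθ]
    nlinarith

lemma eq_zero_of_integrable_mul_exp {c a b : ℝ} (hab : b < |a|)
    (h : Integrable fun θ : ℝ ↦ c * Real.exp (a * θ - b * |θ|)) : c = 0 := by
  obtain ⟨S, hSm, hS, hpos⟩ := exists_ray_nonneg_sub_mul_abs hab
  refine abs_eq_zero.mp (eq_zero_of_le_of_integrableOn h.norm.integrableOn hSm hS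
    (abs_nonneg c) fun θ hθ ↦ ?_)
  rw [norm_mul, Real.norm_of_nonneg (Real.exp_pos _).le, Real.norm_eq_abs]
  exact le_mul_of_one_le_right (abs_nonneg c) (Real.one_le_exp (hpos θ hθ))

lemma eq_mul_exp_of_hasDerivAt {f : ℝ → ℝ} {lam : ℝ} (hf : ∀ θ, HasDerivAt f (lam * f θ) θ)
    (θ : ℝ) : f θ = f 0 * Real.exp (lam * θ) := by
  have hg : ∀ t, HasDerivAt (fun t ↦ f t * Real.exp (-(lam * t))) 0 t := fun t ↦ by
    have he : HasDerivAt (fun t ↦ Real.exp (-(lam * t))) (Real.exp (-(lam * t)) * -lam) t :=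
      ((hasDerivAt_id' t).const_mul lam).fun_neg.exp.congr_deriv (by rw [mul_one])
    exact ((hf t).fun_mul he).congr_deriv (by ring)
  have hconst := is_const_of_deriv_eq_zero (fun t ↦ (hg t).differentiableAt)
    (fun t ↦ (hg t).deriv) θ 0
  simp only [mul_zero, neg_zero, Real.exp_zero, mul_one] at hconst
  rw [← hconst, mul_assoc, ← Real.exp_add, neg_add_cancel, Real.exp_zero, mul_one]

section

variable {E : Type*} [NormedAddCommGroup E] [InnerProductSpace ℝ E]

lemma LinearMap.IsSymmetric.inner_eigenvector_eq_zero_of_integrable {T : E →ₗ[ℝ] E}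
    (hT : T.IsSymmetric) {ζ : ℝ → E} (hζ : ∀ θ, HasDerivAt ζ (T (ζ θ)) θ) {δ : ℝ}
    (hint : Integrable fun θ ↦ ‖ζ θ‖ ^ 2 * Real.exp (-2 * δ * |θ|))
    {v : E} {lam : ℝ} (hv : T v = lam • v) (hlam : δ < |lam|) (θ : ℝ) : ⟪v, ζ θ⟫ = 0 := by
  set f : ℝ → ℝ := fun θ ↦ ⟪v, ζ θ⟫
  have hf : ∀ θ, HasDerivAt f (lam * f θ) θ := fun θ ↦ by
    refine ((hasDerivAt_const θ v).inner ℝ (hζ θ)).congr_deriv ?_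
    rw [inner_zero_left, add_zero, ← hT, hv, real_inner_smul_left]
  have hf_exp := eq_mul_exp_of_hasDerivAt hf
  suffices f 0 ^ 2 = 0 by
    rw [show ⟪v, ζ θ⟫ = f θ from rfl, hf_exp θ, (pow_eq_zero_iff two_ne_zero).mp this, zero_mul]
  refine eq_zero_of_integrable_mul_exp (a := 2 * lam) (b := 2 * δ)
    (by rw [abs_mul, abs_two]; linarith) ?_
  refine (hint.const_mul (‖v‖ ^ 2)).mono (by fun_prop) (.of_forall fun t ↦ ?_)
  have hweight : f 0 ^ 2 * Real.exp (2 * lam * t - 2 * δ * |t|)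
      = f t ^ 2 * Real.exp (-2 * δ * |t|) := by
    rw [hf_exp t, mul_pow, ← Real.exp_nat_mul, mul_assoc (f 0 ^ 2), ← Real.exp_add]
    congr 2
    push_cast
    ring
  have hcs : f t ^ 2 ≤ ‖v‖ ^ 2 * ‖ζ t‖ ^ 2 := by
    rw [← mul_pow, ← sq_abs]
    exact pow_le_pow_left₀ (abs_nonneg _) (abs_real_inner_le_norm v (ζ t)) 2
  rw [Real.norm_of_nonneg (by positivity), Real.norm_of_nonneg (by positivity), hweight,
    ← mul_assoc]
  gcongr

lemma LinearMap.IsSymmetric.apply_eq_zero_of_inner_eigenvector_eq_zero [FiniteDimensional ℝ E]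
    {T : E →ₗ[ℝ] E} (hT : T.IsSymmetric) {x : E}
    (hx : ∀ v lam, lam ≠ 0 → Module.End.HasEigenvector T lam v → ⟪v, x⟫ = 0) : T x = 0 := by
  set b := hT.eigenvectorBasis rfl
  refine b.repr.map_eq_zero_iff.mp (PiLp.ext fun i ↦ ?_)
  rw [b.repr_apply_apply, ← hT, hT.apply_eigenvectorBasis, real_inner_smul_left]
  simp only [RCLike.ofReal_real_eq_id, PiLp.zero_apply, mul_eq_zero]
  refine or_iff_not_imp_left.mpr fun hi ↦ hx _ _ hi
    ⟨Module.End.mem_eigenspace_iff.mpr (hT.apply_eigenvectorBasis rfl i), b.toBasis.ne_zero i⟩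

end

lemma Matrix.hasEigenvalue_toEuclideanLin_iff {𝕜 ι : Type*} [RCLike 𝕜] [Fintype ι]
    [DecidableEq ι] {A : Matrix ι ι 𝕜} {μ : 𝕜} :
    Module.End.HasEigenvalue (toEuclideanLin A) μ ↔ Module.End.HasEigenvalue (toLin' A) μ := by
  rw [Module.End.hasEigenvalue_iff_mem_spectrum, Module.End.hasEigenvalue_iff_mem_spectrum,
    spectrum_toLin', spectrum_toLpLin]

theorem constant_of_subexponential_growth_general
    {n : ℕ} (D : Matrix (Fin n) (Fin n) ℝ) (hD : D.IsSymm) (δ : ℝ)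
    (hgap : ∀ lam : ℝ, lam ≠ 0 → Module.End.HasEigenvalue (Matrix.toLin' D) lam → δ < |lam|)
    (ζ : ℝ → EuclideanSpace ℝ (Fin n))
    (hderiv : ∀ θ : ℝ, HasDerivAt ζ (WithLp.toLp 2 (D.mulVec (ζ θ))) θ)
    (hint : Integrable (fun θ : ℝ => ‖ζ θ‖ ^ 2 * Real.exp (-2 * δ * |θ|))) :
    (∀ θ θ' : ℝ, ζ θ = ζ θ') ∧ ∀ θ : ℝ, D.mulVec (ζ θ) = 0 := by
  have hT : (toEuclideanLin D).IsSymmetric := isSymmetric_toEuclideanLin_iff.mpr hD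
  have hderiv' : ∀ θ, HasDerivAt ζ (toEuclideanLin D (ζ θ)) θ := hderiv
  have hker : ∀ θ, toEuclideanLin D (ζ θ) = 0 := fun θ ↦
    hT.apply_eq_zero_of_inner_eigenvector_eq_zero fun _ lam hlam hv ↦
      have hgap' := hgap lam hlam <| hasEigenvalue_toEuclideanLin_iff.mp <|
        Module.End.hasEigenvalue_of_hasEigenvector hv
      hT.inner_eigenvector_eq_zero_of_integrable hderiv' hint hv.apply_eq_smul hgap' θ
  have hζ' : ∀ θ, HasDerivAt ζ 0 θ := fun θ ↦ hker θ ▸ hderiv' θ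
  exact ⟨is_const_of_deriv_eq_zero (fun θ ↦ (hζ' θ).differentiableAt) fun θ ↦ (hζ' θ).deriv,
    fun θ ↦ congrArg WithLp.ofLp (hker θ)⟩

/-- A solution of `ζ' = D ζ` (D real symmetric) with weighted-`L²` growth below the
spectral gap is constant and lies in the kernel of `D`. -/
theorem constant_of_subexponential_growth
    {n : ℕ} (D : Matrix (Fin n) (Fin n) ℝ) (hD : D.IsSymm) (δ : ℝ) (hδ0 : 0 ≤ δ)
    (hgap : ∀ lam : ℝ, lam ≠ 0 → Module.End.HasEigenvalue (Matrix.toLin' D) lam → δ < |lam|)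
    (ζ : ℝ → EuclideanSpace ℝ (Fin n))
    (hderiv : ∀ θ : ℝ, HasDerivAt ζ (WithLp.toLp 2 (D.mulVec (ζ θ))) θ)
    (hint : Integrable (fun θ : ℝ => ‖ζ θ‖ ^ 2 * Real.exp (-2 * δ * |θ|))) :
    (∀ θ θ' : ℝ, ζ θ = ζ θ') ∧ ∀ θ : ℝ, D.mulVec (ζ θ) = 0 :=
  constant_of_subexponential_growth_general D hD δ hgap ζ hderiv hint
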